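/- In a phylogenetic network, a node belonging to a clade is equivalent only to itself (within the same network): if v is a node of a clade of N and u is a node of N with u ≡ v, then u = v. -/

import Mathlib

open scoped Classical

/-- A finite directed acyclic graph whose leaves are (injectively) labeled in `S`. -/
structure LDag (S : Type) : Type 1 where
  V : Type
  fin : Fintype V
  adj : V → V → Prop
  acyclic : WellFounded (fun a b => adj b a)
  lab : V → S
  labInj : ∀ u v : V, (∀ w, ¬ adj u w) → (∀ w, ¬ adj v w) → lab u = lab v → u = v

attribute [instance] LDag.fin

namespace LDag

variable {S : Type}

/-- A leaf is a node with no children. -/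
def IsLeaf (N : LDag S) (v : N.V) : Prop := ∀ w, ¬ N.adj v w

/-- `v` is a descendant of `u` (every node is a descendant of itself). -/
def Desc (N : LDag S) (u v : N.V) : Prop := Relation.ReflTransGen N.adj u v

/-- The cluster of `u`: the set of labels of the leaves that are descendants of `u`. -/
def cluster (N : LDag S) (u : N.V) : Set S :=
  {s | ∃ v, N.Desc u v ∧ N.IsLeaf v ∧ N.lab v = s}

/-- A tree node: a node with at most one parent. -/
def TreeNode (N : LDag S) (v : N.V) : Prop :=
  ∀ p q, N.adj p v → N.adj q v → p = q

/-- A root: a node with no parents. -/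
def IsRoot (N : LDag S) (r : N.V) : Prop := ∀ u, ¬ N.adj u r

/-- Tree-child: every internal node has a child that is a tree node. -/
def TreeChild (N : LDag S) : Prop :=
  ∀ v, ¬ N.IsLeaf v → ∃ w, N.adj v w ∧ N.TreeNode w

/-- `PathN N u v k`: there is a directed path of length `k` from `u` to `v`. -/
inductive PathN (N : LDag S) : N.V → N.V → ℕ → Prop
  | refl (v : N.V) : PathN N v v 0
  | cons {u v w : N.V} {k : ℕ} : N.adj u v → PathN N v w k → PathN N u w (k + 1)

/-- The height of a node: the largest length of a directed path from it to a leaf. -/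
noncomputable def height (N : LDag S) (v : N.V) : ℕ :=
  sSup {k | ∃ s, N.IsLeaf s ∧ PathN N v s k}

/-- Node equivalence between (possibly equal) labeled DAGs, defined recursively:
two leaves with the same label are equivalent, and two internal nodes are equivalent
when their children can be matched into equivalent pairs. -/
noncomputable def equivTo (N1 N2 : LDag S) : N1.V → N2.V → Prop :=
  N1.acyclic.fix (fun u ih v =>
    (N1.IsLeaf u ∧ N2.IsLeaf v ∧ N1.lab u = N2.lab v) ∨
    (¬ N1.IsLeaf u ∧ ¬ N2.IsLeaf v ∧
      ∃ f : {w // N1.adj u w} ≃ {w // N2.adj v w},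
        ∀ w : {w // N1.adj u w}, ih w.1 w.2 (f w).1))

end LDag

/-- Pre-nested labels: finitely branching trees of labels (multisets are obtained
as a quotient by `NEq` below). -/
inductive PreNested (S : Type) : Type
  | leaf : S → PreNested S
  | node : List (PreNested S) → PreNested S

/-- Equality of pre-nested labels as nested multisets. -/
inductive NEq {S : Type} : PreNested S → PreNested S → Prop
  | leaf (a : S) : NEq (.leaf a) (.leaf a)
  | node {l m : List (PreNested S)} : List.Forall₂ NEq l m → NEq (.node l) (.node m)
  | perm {l m : List (PreNested S)} : l.Perm m → NEq (.node l) (.node m)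
  | symm {a b : PreNested S} : NEq a b → NEq b a
  | trans {a b c : PreNested S} : NEq a b → NEq b c → NEq a c

mutual
  theorem NEq.refl {S : Type} : ∀ a : PreNested S, NEq a a
    | .leaf s => .leaf s
    | .node l => .node (NEq.reflL l)
  theorem NEq.reflL {S : Type} : ∀ l : List (PreNested S), List.Forall₂ NEq l l
    | [] => .nil
    | a :: l => .cons (NEq.refl a) (NEq.reflL l)
end

instance PreNested.setoid (S : Type) : Setoid (PreNested S) :=
  ⟨NEq, ⟨NEq.refl, fun h => h.symm, fun h1 h2 => h1.trans h2⟩⟩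

/-- Nested multisets (of multisets of ...) of labels. -/
def Nested (S : Type) : Type := Quotient (PreNested.setoid S)

/-- `TaxaIn s p`: the taxon `s` occurs somewhere (at any nesting depth) in `p`. -/
inductive TaxaIn {S : Type} : S → PreNested S → Prop
  | leaf (s : S) : TaxaIn s (.leaf s)
  | node {s : S} {p : PreNested S} {l : List (PreNested S)} :
      p ∈ l → TaxaIn s p → TaxaIn s (.node l)

mutual
  /-- Nesting depth of a pre-nested label: a singleton `{s}` has depth 1. -/
  def depthP {S : Type} : PreNested S → ℕ
    | .leaf _ => 1
    | .node l => depthL l + 1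
  def depthL {S : Type} : List (PreNested S) → ℕ
    | [] => 0
    | p :: ps => max (depthP p) (depthL ps)
end

namespace LDag

variable {S : Type}

/-- The nested label of a node: the singleton of its label for a leaf, and the
multiset of the nested labels of its children otherwise. -/
noncomputable def nested (N : LDag S) : N.V → Nested S :=
  N.acyclic.fix (fun v ih =>
    if h : N.IsLeaf v then (⟦PreNested.leaf (N.lab v)⟧ : Nested S)
    else ⟦PreNested.node (((Finset.univ.filter (fun w => N.adj v w)).attach.toList).map
        (fun w => (ih w.1 (Finset.mem_filter.mp w.2).2).out))⟧)

/-- `Υ(N)`: the multiset of equivalence classes (= nested labels) of the nodes of `N`,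
with multiplicities. -/
noncomputable def UpsilonM (N : LDag S) : Multiset (Nested S) :=
  Finset.univ.val.map N.nested

/-- Label-preserving isomorphisms of labeled DAGs. -/
structure Iso (N1 N2 : LDag S) where
  toEquiv : N1.V ≃ N2.V
  adj_iff : ∀ u v : N1.V, N2.adj (toEquiv u) (toEquiv v) ↔ N1.adj u v
  lab_leaf : ∀ v : N1.V, N1.IsLeaf v → N2.lab (toEquiv v) = N1.lab v

def IsIso (N1 N2 : LDag S) : Prop := Nonempty (Iso N1 N2)

theorem Iso.leaf_map {N1 N2 : LDag S} (e : Iso N1 N2) {v : N1.V} (h : N1.IsLeaf v) :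
    N2.IsLeaf (e.toEquiv v) := by
  intro w hw
  have hw' : N2.adj (e.toEquiv v) (e.toEquiv (e.toEquiv.symm w)) := by simpa using hw
  exact h _ ((e.adj_iff _ _).mp hw')

def Iso.refl (N : LDag S) : Iso N N :=
  ⟨Equiv.refl _, fun _ _ => Iff.rfl, fun _ _ => rfl⟩

def Iso.symm {N1 N2 : LDag S} (e : Iso N1 N2) : Iso N2 N1 where
  toEquiv := e.toEquiv.symm
  adj_iff u v := by rw [← e.adj_iff]; simp
  lab_leaf v hv := by
    have h1 : N1.IsLeaf (e.toEquiv.symm v) := by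
      intro w hw
      have : N2.adj v (e.toEquiv w) := by
        have := (e.adj_iff (e.toEquiv.symm v) w).mpr hw
        simpa using this
      exact hv _ this
    have := e.lab_leaf _ h1
    simpa using this.symm

def Iso.trans {N1 N2 N3 : LDag S} (e : Iso N1 N2) (f : Iso N2 N3) : Iso N1 N3 where
  toEquiv := e.toEquiv.trans f.toEquiv
  adj_iff u v := by
    simp only [Equiv.trans_apply]
    rw [f.adj_iff, e.adj_iff]
  lab_leaf v hv := by
    simp only [Equiv.trans_apply]
    rw [f.lab_leaf _ (e.leaf_map hv), e.lab_leaf _ hv]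

instance isoSetoid (S : Type) : Setoid (LDag S) :=
  ⟨IsIso, ⟨fun N => ⟨Iso.refl N⟩, fun ⟨e⟩ => ⟨e.symm⟩, fun ⟨e⟩ ⟨f⟩ => ⟨e.trans f⟩⟩⟩

/-- Isomorphism classes of labeled DAGs. -/
def IsoClass (S : Type) : Type 1 := Quotient (isoSetoid S)

/-- The rooted subnetwork `N(u)` generated by a node `u`: the induced subgraph on
the set of descendants of `u`. -/
noncomputable def subnet (N : LDag S) (u : N.V) : LDag S where
  V := {v // N.Desc u v}
  fin := Subtype.fintype _
  adj a b := N.adj a.1 b.1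
  acyclic := by
    have h : (fun (a b : {v // N.Desc u v}) => N.adj b.1 a.1) =
        InvImage (fun a b => N.adj b a) Subtype.val := rfl
    rw [h]
    exact InvImage.wf _ N.acyclic
  lab v := N.lab v.1
  labInj := by
    intro a b ha hb hlab
    apply Subtype.ext
    refine N.labInj a.1 b.1 ?_ ?_ hlab
    · intro w hw
      exact ha ⟨w, a.2.trans (Relation.ReflTransGen.single hw)⟩ hw
    · intro w hw
      exact hb ⟨w, b.2.trans (Relation.ReflTransGen.single hw)⟩ hw

/-- `Σ(N)`: the multiset of isomorphism classes of the rooted subnetworks generated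
by the nodes of `N`, with multiplicities. -/
noncomputable def SigmaM (N : LDag S) : Multiset (IsoClass S) :=
  Finset.univ.val.map (fun u => (Quotient.mk (isoSetoid S) (N.subnet u) : IsoClass S))

/-- Nakhleh's dissimilarity `m(N1,N2) = |Υ(N1) △ Υ(N2)| / 2`. -/
noncomputable def mDist (N1 N2 : LDag S) : ℝ :=
  (((N1.UpsilonM - N2.UpsilonM) + (N2.UpsilonM - N1.UpsilonM)).card : ℝ) / 2

/-- The distance `σ(N1,N2) = |Σ(N1) △ Σ(N2)| / 2`. -/
noncomputable def sigmaDist (N1 N2 : LDag S) : ℝ :=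
  (((N1.SigmaM - N2.SigmaM) + (N2.SigmaM - N1.SigmaM)).card : ℝ) / 2

end LDag

/-- An `S`-DAG: a labeled DAG whose leaves are bijectively labeled by `S`. -/
structure SDag (S : Type) extends LDag S where
  surjLab : ∀ s : S, ∃ v, toLDag.IsLeaf v ∧ toLDag.lab v = s

/-- A phylogenetic network on `S`: a rooted `S`-DAG. -/
structure PhyloNetwork (S : Type) extends SDag S where
  rooted : ∃! r, toLDag.IsRoot r

namespace LDag

variable {S : Type}

theorem equivTo_iff (N1 N2 : LDag S) (u : N1.V) (v : N2.V) :
    N1.equivTo N2 u v ↔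
      (N1.IsLeaf u ∧ N2.IsLeaf v ∧ N1.lab u = N2.lab v) ∨
      (¬ N1.IsLeaf u ∧ ¬ N2.IsLeaf v ∧
        ∃ f : {w // N1.adj u w} ≃ {w // N2.adj v w},
          ∀ w : {w // N1.adj u w}, N1.equivTo N2 w.1 (f w).1) := by
  rw [equivTo, WellFounded.fix_eq]

/-- Inductively, a child `c` of `u` and its matched child `d` of `v` coincide; as `d` has a
single parent, `u = v`. -/
theorem eq_of_equivTo_of_forall_desc_treeNode (N : LDag S) {v : N.V}
    (hv : ∀ x, N.Desc v x → N.TreeNode x) {u : N.V} (h : N.equivTo N u v) : u = v := by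
  induction v using N.acyclic.induction generalizing u with
  | _ v ih =>
    rcases (equivTo_iff N N u v).mp h with ⟨hu, hv', hlab⟩ | ⟨hu, -, f, hf⟩
    · exact N.labInj u v hu hv' hlab
    · obtain ⟨c, hc⟩ : ∃ c, N.adj u c := not_forall_not.mp hu
      have hcd := hf ⟨c, hc⟩
      generalize f ⟨c, hc⟩ = d at hcd
      obtain ⟨d, hd⟩ := d
      have hvd : N.Desc v d := .single hd
      replace hcd : c = d := ih d hd (fun x hx => hv x (hvd.trans hx)) hcd
      exact hv d hvd u v (hcd ▸ hc) hd

end LDag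

/-- In a phylogenetic network, a node belonging to a clade (a rooted subnetwork all of
whose nodes are tree nodes) is equivalent only to itself. -/
theorem clade_node_equiv_self {S : Type} (N : PhyloNetwork S) (v : N.V)
    (hclade : ∃ w : N.V, (∀ x : N.V, N.toLDag.Desc w x → N.toLDag.TreeNode x) ∧
      N.toLDag.Desc w v)
    (u : N.V) (h : N.toLDag.equivTo N.toLDag u v) : u = v := by
  obtain ⟨w, hw, hwv⟩ := hclade
  exact N.toLDag.eq_of_equivTo_of_forall_desc_treeNode (fun x hvx => hw x (hwv.trans hvx)) h
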